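/- Let U = {1, …, u} be a universe, 𝒮 a family of nonempty subsets of U, and κ ∈ ℕ. Construct the training data set over features d_1, …, d_u: for each S ∈ 𝒮, one red example e_S with e_S[d_i] = 0 for i ∈ S and e_S[d_i] = 1 for i ∉ S; and one blue example b with b[d_i] = 1 for all i ∈ U. Let T be the decision tree whose cuts c_1, …, c_u form a path, where c_i has feature d_i and threshold −1, the left child of every c_i is a leaf labeled red, the right child of c_i is c_{i+1} for i < u, and the right child of c_u is a leaf labeled blue. Then there exists H ⊆ U with |H| ≤ κ such that H ∩ S ≠ ∅ for every S ∈ 𝒮 if and only if the Threshold Adjustment instance ((E, λ), T, κ, 0) is a yes-instance. -/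

import Mathlib

/-! A tree of the same shape as the path `T` is again a path of cuts, each with a leaf on its
left, and a cut whose threshold stays at `-1` sends every example to the right. Moving the
thresholds of the cuts of a hitting set `H` to `0`, with all left leaves red, sends each red
example `e_S` to the left at a cut of `H ∩ S` and the blue example down to the blue leaf.
Conversely, in an adjusted tree without errors the red example `e_S` and the blue example are
separated at some cut; since they differ only on `S`, where they take the values `0` and `1`,
that cut has a feature in `S` and a threshold in `[0, 1)`. The features of the adjusted cuts with
nonnegative threshold therefore form a hitting set. -/

/-- The two class labels. -/
def blue : Bool := true

def red : Bool := false

/-- Decision trees with features of type `α`: each leaf carries a class label,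
each internal node (a *cut*) carries a feature and a real threshold. -/
inductive DTree (α : Type) : Type
  | leaf (label : Bool) : DTree α
  | node (feat : α) (thr : ℝ) (left right : DTree α) : DTree α

namespace DTree

/-- The class that the tree assigns to the example `e`. -/
noncomputable def classify {α : Type} : DTree α → (α → ℝ) → Bool
  | leaf c, _ => c
  | node f x l r, e => if e f ≤ x then l.classify e else r.classify e

end DTree

/-- The number of errors of `T` on the training data set `(E, lab)`. -/
noncomputable def errorCount {α ι : Type} [Fintype ι] (E : ι → α → ℝ)
    (lab : ι → Bool) (T : DTree α) : ℕ :=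
  (Finset.univ.filter (fun i => T.classify (E i) ≠ lab i)).card

/-- `T'` has the same shape as `T` and the same feature at every cut; thresholds and
leaf labels may differ. -/
def SameShapeFeat {α : Type} : DTree α → DTree α → Prop
  | DTree.leaf _, DTree.leaf _ => True
  | DTree.node f _ l r, DTree.node f' _ l' r' =>
      f = f' ∧ SameShapeFeat l l' ∧ SameShapeFeat r r'
  | _, _ => False

/-- The number of cuts at which the thresholds of the two (same-shaped) trees
differ. -/
noncomputable def adjCost {α : Type} : DTree α → DTree α → ℕ
  | DTree.node _ x l r, DTree.node _ x' l' r' =>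
      (if x = x' then 0 else 1) + adjCost l l' + adjCost r r'
  | _, _ => 0

/-- The Threshold Adjustment instance `((E, lab), T, k, t)` is a yes-instance:
by performing threshold adjustments on at most `k` cuts of `T` and additionally
relabeling the leaves of `T` arbitrarily, one can obtain a decision tree with at
most `t` errors on `(E, lab)`. -/
def TAYes {α ι : Type} [Fintype ι] (E : ι → α → ℝ) (lab : ι → Bool)
    (T : DTree α) (k t : ℕ) : Prop :=
  ∃ T' : DTree α, SameShapeFeat T T' ∧ adjCost T T' ≤ k ∧ errorCount E lab T' ≤ t

/-- The path-shaped decision tree whose cuts use the listed features (in order), all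
with threshold `thr`; the left child of every cut is a red leaf, the right child of
the last cut is a blue leaf. -/
def chainTree {α : Type} (thr : ℝ) : List α → DTree α
  | [] => DTree.leaf blue
  | f :: fs => DTree.node f thr (DTree.leaf red) (chainTree thr fs)

namespace DTree

variable {α : Type}

def spine : List (α × ℝ × Bool) → Bool → DTree α
  | [], c => leaf c
  | (f, x, l) :: L, c => node f x (leaf l) (spine L c)

theorem classify_spine_of_forall_lt {L : List (α × ℝ × Bool)} {c : Bool} {e : α → ℝ}
    (h : ∀ p ∈ L, p.2.1 < e p.1) : (spine L c).classify e = c := by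
  induction L with
  | nil => rfl
  | cons p L ih =>
    obtain ⟨f, x, l⟩ := p
    rw [spine, classify, if_neg (not_le.2 (h _ List.mem_cons_self))]
    exact ih fun p hp => h p (List.mem_cons_of_mem _ hp)

theorem classify_spine_of_exists_le {L : List (α × ℝ × Bool)} {c l : Bool} {e : α → ℝ}
    (hl : ∀ p ∈ L, p.2.2 = l) (h : ∃ p ∈ L, e p.1 ≤ p.2.1) : (spine L c).classify e = l := by
  induction L with
  | nil => simp at h
  | cons p L ih =>
    obtain ⟨f, x, b⟩ := p
    rw [spine, classify]
    split_ifs with hfx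
    · exact hl _ List.mem_cons_self
    · refine ih (fun p hp => hl p (List.mem_cons_of_mem _ hp)) ?_
      obtain ⟨q, hq, hqle⟩ := h
      rcases List.mem_cons.1 hq with rfl | hq
      · exact absurd hqle hfx
      · exact ⟨q, hq, hqle⟩

theorem classify_spine_congr {L : List (α × ℝ × Bool)} {c : Bool} {e e' : α → ℝ}
    (h : ∀ p ∈ L, (e p.1 ≤ p.2.1 ↔ e' p.1 ≤ p.2.1)) :
    (spine L c).classify e = (spine L c).classify e' := by
  induction L with
  | nil => rfl
  | cons p L ih =>
    obtain ⟨f, x, l⟩ := p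
    simp only [spine, classify, h _ List.mem_cons_self,
      ih fun p hp => h p (List.mem_cons_of_mem _ hp)]

end DTree

open DTree

section Chain

variable {α : Type}

theorem SameShapeFeat.exists_spine_of_chainTree {thr : ℝ} :
    ∀ {fs : List α} {T : DTree α}, SameShapeFeat (chainTree thr fs) T →
      ∃ L c, T = spine L c ∧ L.map Prod.fst = fs
  | [], leaf c, _ => ⟨[], c, rfl, rfl⟩
  | f :: fs, node f' x (leaf l) r, ⟨hf, _, hr⟩ => by
    obtain ⟨L, c, rfl, hL⟩ := exists_spine_of_chainTree hr
    exact ⟨(f', x, l) :: L, c, rfl, by simp [hL, hf]⟩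

theorem sameShapeFeat_chainTree_spine (thr : ℝ) (c : Bool) :
    ∀ L : List (α × ℝ × Bool), SameShapeFeat (chainTree thr (L.map Prod.fst)) (spine L c)
  | [] => trivial
  | _ :: L => ⟨rfl, trivial, sameShapeFeat_chainTree_spine thr c L⟩

theorem adjCost_chainTree_spine (thr : ℝ) (c : Bool) :
    ∀ L : List (α × ℝ × Bool),
      adjCost (chainTree thr (L.map Prod.fst)) (spine L c) = L.countP (·.2.1 ≠ thr)
  | [] => rfl
  | (f, x, l) :: L => by
    simp only [List.map_cons, chainTree, spine, adjCost, adjCost_chainTree_spine thr c L,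
      List.countP_cons, eq_comm (a := thr)]
    split_ifs <;> simp_all [add_comm]

end Chain

theorem errorCount_eq_zero_iff {α ι : Type} [Fintype ι] {E : ι → α → ℝ} {lab : ι → Bool}
    {T : DTree α} : errorCount E lab T = 0 ↔ ∀ i, T.classify (E i) = lab i := by
  simp [errorCount, Finset.filter_eq_empty_iff]

section HittingSet

variable {u : ℕ} (𝒮 : Finset (Finset (Fin u)))

def hittingSetExamples : {S // S ∈ 𝒮} ⊕ Unit → Fin u → ℝ :=
  Sum.elim (fun S i => if i ∈ S.1 then 0 else 1) (fun _ _ => 1)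

def hittingSetLabels : {S // S ∈ 𝒮} ⊕ Unit → Bool :=
  Sum.elim (fun _ => red) (fun _ => blue)

def hittingSpine (H : Finset (Fin u)) : List (Fin u × ℝ × Bool) :=
  (List.finRange u).map fun i => (i, if i ∈ H then 0 else -1, red)

theorem map_fst_hittingSpine (H : Finset (Fin u)) :
    (hittingSpine H).map Prod.fst = List.finRange u := by
  simp [hittingSpine, Function.comp_def]

theorem countP_hittingSpine (H : Finset (Fin u)) :
    (hittingSpine H).countP (·.2.1 ≠ -1) = H.card := by
  rw [hittingSpine, List.countP_map, List.countP_eq_length_filter,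
    ← List.toFinset_card_of_nodup ((List.nodup_finRange u).filter _)]
  congr 1
  ext i
  by_cases hi : i ∈ H <;> simp [hi]

variable {𝒮}

theorem taYes_of_hittingSet {κ : ℕ} {H : Finset (Fin u)} (hcard : H.card ≤ κ)
    (hhit : ∀ S ∈ 𝒮, (H ∩ S).Nonempty) :
    TAYes (hittingSetExamples 𝒮) (hittingSetLabels 𝒮) (chainTree (-1) (List.finRange u)) κ 0 := by
  have hL := map_fst_hittingSpine H
  refine ⟨spine (hittingSpine H) blue, hL ▸ sameShapeFeat_chainTree_spine _ _ _, ?_, ?_⟩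
  · rwa [← hL, adjCost_chainTree_spine, countP_hittingSpine]
  · refine (errorCount_eq_zero_iff.2 ?_).le
    rintro (⟨S, hS⟩ | ⟨⟩)
    · refine classify_spine_of_exists_le (by simp [hittingSpine, hittingSetLabels]) ?_
      obtain ⟨i, hi⟩ := hhit S hS
      obtain ⟨hiH, hiS⟩ := Finset.mem_inter.1 hi
      exact ⟨_, List.mem_map_of_mem (List.mem_finRange i), by simp [hittingSetExamples, hiH, hiS]⟩
    · refine classify_spine_of_forall_lt ?_
      simp only [hittingSpine, List.mem_map]
      rintro _ ⟨i, -, rfl⟩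
      split_ifs <;> simp [hittingSetExamples]

theorem exists_hittingSet_of_taYes {κ : ℕ}
    (h : TAYes (hittingSetExamples 𝒮) (hittingSetLabels 𝒮) (chainTree (-1) (List.finRange u)) κ 0) :
    ∃ H : Finset (Fin u), H.card ≤ κ ∧ ∀ S ∈ 𝒮, (H ∩ S).Nonempty := by
  obtain ⟨T, hshape, hcost, herr⟩ := h
  obtain ⟨L, c, rfl, hL⟩ := hshape.exists_spine_of_chainTree
  have hcorrect := errorCount_eq_zero_iff.1 (Nat.le_zero.1 herr)
  set H := ((L.filter (0 ≤ ·.2.1)).map Prod.fst).toFinset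
  refine ⟨H, ?_, fun S hS => ?_⟩
  · calc H.card ≤ (L.filter (0 ≤ ·.2.1)).length := (List.toFinset_card_le _).trans_eq (by simp)
      _ ≤ L.countP (·.2.1 ≠ -1) := by
        rw [← List.countP_eq_length_filter]
        refine List.countP_mono_left fun p _ hp => ?_
        simp only [decide_eq_true_eq] at hp ⊢
        linarith
      _ ≤ κ := by rwa [← adjCost_chainTree_spine, hL]
  · by_contra hdisj
    have hsame : ∀ p ∈ L,
        (hittingSetExamples 𝒮 (.inl ⟨S, hS⟩) p.1 ≤ p.2.1 ↔ hittingSetExamples 𝒮 (.inr ()) p.1 ≤ p.2.1) := by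
      intro p hp
      by_cases hpS : p.1 ∈ S
      · have hneg : p.2.1 < 0 := by
          by_contra! hnn
          have hpH : p.1 ∈ H := List.mem_toFinset.2
            (List.mem_map_of_mem (List.mem_filter.2 ⟨hp, by simpa using hnn⟩))
          exact hdisj ⟨p.1, Finset.mem_inter.2 ⟨hpH, hpS⟩⟩
        simp only [hittingSetExamples, Sum.elim_inl, Sum.elim_inr, if_pos hpS]
        constructor <;> intro <;> linarith
      · simp [hittingSetExamples, hpS]
    have := classify_spine_congr (c := c) hsame
    simp [hcorrect, hittingSetLabels, red, blue] at this

end HittingSet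

theorem stmt11_general (u : ℕ) (𝒮 : Finset (Finset (Fin u)))
    (κ : ℕ) :
    (∃ H : Finset (Fin u), H.card ≤ κ ∧ ∀ S ∈ 𝒮, (H ∩ S).Nonempty) ↔
    TAYes (ι := {S : Finset (Fin u) // S ∈ 𝒮} ⊕ Unit)
      (Sum.elim (fun S (i : Fin u) => if i ∈ S.1 then (0 : ℝ) else 1)
        (fun _ (_ : Fin u) => 1))
      (Sum.elim (fun _ => red) (fun _ => blue))
      (chainTree (-1) (List.finRange u)) κ 0 :=
  ⟨fun ⟨_, hcard, hhit⟩ => taYes_of_hittingSet hcard hhit, exists_hittingSet_of_taYes⟩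

/-- Hitting-set reduction. For a family `𝒮` of nonempty subsets of
`U = Fin u`: one red example per `S ∈ 𝒮` (value `0` on features in `S`, value `1`
elsewhere), one blue example with all values `1`; the tree is the path of cuts
`c_1, …, c_u`, where `c_i` has feature `d_i` and threshold `−1`. Then a hitting set of
size at most `κ` exists if and only if `((E, λ), T, κ, 0)` is a yes-instance of
Threshold Adjustment. -/
theorem stmt11 (u : ℕ) (𝒮 : Finset (Finset (Fin u))) (h𝒮 : ∀ S ∈ 𝒮, S.Nonempty)
    (κ : ℕ) :
    (∃ H : Finset (Fin u), H.card ≤ κ ∧ ∀ S ∈ 𝒮, (H ∩ S).Nonempty) ↔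
    TAYes (ι := {S : Finset (Fin u) // S ∈ 𝒮} ⊕ Unit)
      (Sum.elim (fun S (i : Fin u) => if i ∈ S.1 then (0 : ℝ) else 1)
        (fun _ (_ : Fin u) => 1))
      (Sum.elim (fun _ => red) (fun _ => blue))
      (chainTree (-1) (List.finRange u)) κ 0 :=
  stmt11_general u 𝒮 κ
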